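/- Let γ > 1 and κ = (γ−1)/2. Let θ, ω be C¹ and let S, B be positive C¹ functions on an open set Ω ⊆ ℝ², with 0 < ω < π/2 on Ω. Set α = θ+ω, β = θ−ω, and ∂⁺f = cos(α)·f_x + sin(α)·f_y, ∂⁻f = cos(β)·f_x + sin(β)·f_y, ∂⁰f = cos(θ)·f_x + sin(θ)·f_y. Assume on Ω: ∂⁰S = 0, ∂⁰B = 0, ∂⁺θ + (cos²ω/(sin²ω+κ))·∂⁺ω = (sin(2ω)/(4κ))·((1/γ)·∂⁺(ln S) − ∂⁺(ln B)), and ∂⁻θ − (cos²ω/(sin²ω+κ))·∂⁻ω = −(sin(2ω)/(4κ))·((1/γ)·∂⁻(ln S) − ∂⁻(ln B)). Then for every C² function I on Ω with ∂⁰I ≡ 0 on Ω, one has ∂⁰(∂⁺I / G(ω)) = 0 on Ω, where G(ω) = (sin²ω/(κ+sin²ω))^((κ+1)/(2κ)). -/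

import Mathlib

set_option maxHeartbeats 1000000


open Real Set

/-- Partial derivative in the `x`-direction. -/
noncomputable def px (f : ℝ × ℝ → ℝ) (p : ℝ × ℝ) : ℝ := fderiv ℝ f p (1, 0)

/-- Partial derivative in the `y`-direction. -/
noncomputable def py (f : ℝ × ℝ → ℝ) (p : ℝ × ℝ) : ℝ := fderiv ℝ f p (0, 1)

/-- Normalized directional derivative along the direction of inclination angle `a`. -/
noncomputable def dDir (a : ℝ × ℝ → ℝ) (f : ℝ × ℝ → ℝ) (p : ℝ × ℝ) : ℝ :=
  Real.cos (a p) * px f p + Real.sin (a p) * py f p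

/-- The function `G(ω) = (sin²ω/(κ+sin²ω))^((κ+1)/(2κ))`. -/
noncomputable def Gfun (κ ω : ℝ) : ℝ :=
  (Real.sin ω ^ 2 / (κ + Real.sin ω ^ 2)) ^ ((κ + 1) / (2 * κ))

lemma alg_scalar (κ γ c0 s0 cw sw ca sa cb sb Sv Bv t1 t2 w1 w2 s1 s2 b1 b2
    i1 i2 h11 h12 h21 h22 A A' : ℝ)
    (hκpos : 0 < κ) (hγ : 0 < γ)
    (hpyth : cw ^ 2 + sw ^ 2 = 1)
    (hca : ca = c0 * cw - s0 * sw) (hsa : sa = s0 * cw + c0 * sw)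
    (hcb : cb = c0 * cw + s0 * sw) (hsb : sb = s0 * cw - c0 * sw)
    (hsw : 0 < sw) (hcw : 0 < cw) (hSv : 0 < Sv) (hBv : 0 < Bv) (hA : 0 < A)
    (hAA' : A' * (sw ^ 2 / (κ + sw ^ 2)) = A)
    (hF1 : c0 * i1 + s0 * i2 = 0)
    (hF2a : c0 * h11 + i1 * (-s0 * t1) + (s0 * h12 + i2 * (c0 * t1)) = 0)
    (hF2b : c0 * h21 + i1 * (-s0 * t2) + (s0 * h22 + i2 * (c0 * t2)) = 0)
    (hsym : h12 = h21)
    (hS0 : c0 * s1 + s0 * s2 = 0) (hB0 : c0 * b1 + s0 * b2 = 0)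
    (hplus : (ca * t1 + sa * t2) + cw ^ 2 / (sw ^ 2 + κ) * (ca * w1 + sa * w2)
      = 2 * sw * cw / (4 * κ) *
          (1 / γ * (ca * (Sv⁻¹ * s1) + sa * (Sv⁻¹ * s2)) - (ca * (Bv⁻¹ * b1) + sa * (Bv⁻¹ * b2))))
    (hminus : (cb * t1 + sb * t2) - cw ^ 2 / (sw ^ 2 + κ) * (cb * w1 + sb * w2)
      = -(2 * sw * cw / (4 * κ)) *
          (1 / γ * (cb * (Sv⁻¹ * s1) + sb * (Sv⁻¹ * s2)) - (cb * (Bv⁻¹ * b1) + sb * (Bv⁻¹ * b2)))) :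
    c0 * ((ca * i1 + sa * i2) *
          (-((2 * sw * cw * (κ + sw ^ 2) - sw ^ 2 * (2 * sw * cw)) / (κ + sw ^ 2) ^ 2
              * ((κ + 1) / (2 * κ)) * A') / A ^ 2 * w1)
        + A⁻¹ * (ca * h11 + i1 * (-sa * (t1 + w1)) + (sa * h12 + i2 * (ca * (t1 + w1)))))
    + s0 * ((ca * i1 + sa * i2) *
          (-((2 * sw * cw * (κ + sw ^ 2) - sw ^ 2 * (2 * sw * cw)) / (κ + sw ^ 2) ^ 2
              * ((κ + 1) / (2 * κ)) * A') / A ^ 2 * w2)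
        + A⁻¹ * (ca * h21 + i1 * (-sa * (t2 + w2)) + (sa * h22 + i2 * (ca * (t2 + w2))))) = 0 := by
  have hsκ : (0:ℝ) < sw ^ 2 + κ := by positivity
  have e1' : ca * i1 + sa * i2 = sw * (-s0 * i1 + c0 * i2) := by
    rw [hca, hsa]; linear_combination cw * hF1
  have e2' : -sa * i1 + ca * i2 = cw * (-s0 * i1 + c0 * i2) := by
    rw [hca, hsa]; linear_combination (-sw) * hF1
  have e3 : c0 * (ca * h11 + sa * h12) + s0 * (ca * h21 + sa * h22)
      = -((ca * t1 + sa * t2) * (-s0 * i1 + c0 * i2)) := by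
    linear_combination ca * hF2a + sa * hF2b + (c0 * sa - s0 * ca) * hsym
  have hS' : (ca * s1 + sa * s2) + (cb * s1 + sb * s2) = 0 := by
    rw [hca, hsa, hcb, hsb]; linear_combination 2 * cw * hS0
  have hB' : (ca * b1 + sa * b2) + (cb * b1 + sb * b2) = 0 := by
    rw [hca, hsa, hcb, hsb]; linear_combination 2 * cw * hB0
  have eT : (cb * t1 + sb * t2) - (ca * t1 + sa * t2)
      = cw ^ 2 / (sw ^ 2 + κ) * ((ca * w1 + sa * w2) + (cb * w1 + sb * w2)) := by
    linear_combination hminus - hplus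
      - (sw * cw / (2 * κ)) * (1 / γ) * Sv⁻¹ * hS'
      + (sw * cw / (2 * κ)) * Bv⁻¹ * hB'
  have h2T : (ca * t1 + sa * t2) + (cb * t1 + sb * t2) = 2 * cw * (c0 * t1 + s0 * t2) := by
    rw [hca, hsa, hcb, hsb]; ring
  have h2W : (ca * w1 + sa * w2) + (cb * w1 + sb * w2) = 2 * cw * (c0 * w1 + s0 * w2) := by
    rw [hca, hsa, hcb, hsb]; ring
  have hTp : ca * t1 + sa * t2
      = cw * (c0 * t1 + s0 * t2) - cw ^ 2 / (sw ^ 2 + κ) * (cw * (c0 * w1 + s0 * w2)) := by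
    linear_combination (1/2) * h2T - (1/2) * eT - (cw ^ 2 / (sw ^ 2 + κ)) / 2 * h2W
  have key : (1 + cw ^ 2 / (sw ^ 2 + κ)) * cw * A ^ 2
      = (2 * sw * cw * (κ + sw ^ 2) - sw ^ 2 * (2 * sw * cw)) / (κ + sw ^ 2) ^ 2
          * ((κ + 1) / (2 * κ)) * A' * sw * A := by
    have h1 : A * (κ + sw ^ 2) = A' * sw ^ 2 := by
      field_simp at hAA'; linear_combination -hAA'
    field_simp
    linear_combination (κ * A * (κ + sw ^ 2) ^ 2) * hpyth
      + (κ * (κ + 1) * (κ + sw ^ 2)) * h1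
  have hAinv : A * A⁻¹ = 1 := mul_inv_cancel₀ hA.ne'
  linear_combination
    (-((2 * sw * cw * (κ + sw ^ 2) - sw ^ 2 * (2 * sw * cw)) / (κ + sw ^ 2) ^ 2
        * ((κ + 1) / (2 * κ)) * A') / A ^ 2 * (c0 * w1 + s0 * w2)) * e1'
    + A⁻¹ * (c0 * (t1 + w1) + s0 * (t2 + w2)) * e2'
    + A⁻¹ * e3
    - A⁻¹ * (-s0 * i1 + c0 * i2) * hTp
    + ((-s0 * i1 + c0 * i2) * (c0 * w1 + s0 * w2) / A ^ 3) * key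
    + ((-((-s0 * i1 + c0 * i2) * (c0 * w1 + s0 * w2) * cw * (1 + cw ^ 2 / (sw ^ 2 + κ))
          * A⁻¹ * (A * A⁻¹ + 1)))
      + ((-s0 * i1 + c0 * i2) * (c0 * w1 + s0 * w2)
          * ((2 * sw * cw * (κ + sw ^ 2) - sw ^ 2 * (2 * sw * cw)) / (κ + sw ^ 2) ^ 2
              * ((κ + 1) / (2 * κ)) * A') * sw * A⁻¹ ^ 2)) * hAinv

/-- if `(θ, ω, S, B)` satisfy the characteristic form of the steady full
Euler equations, then for every C² function `I` with `∂⁰I ≡ 0` one has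
`∂⁰(∂⁺I / G(ω)) = 0`. -/
theorem d0_of_dplus_div_G
    (γ κ : ℝ) (hγ : 1 < γ) (hκ : κ = (γ - 1) / 2)
    (Ω : Set (ℝ × ℝ)) (hΩ : IsOpen Ω)
    (θ ω S B : ℝ × ℝ → ℝ)
    (hθ : ContDiffOn ℝ 1 θ Ω) (hω : ContDiffOn ℝ 1 ω Ω)
    (hS : ContDiffOn ℝ 1 S Ω) (hB : ContDiffOn ℝ 1 B Ω)
    (hSpos : ∀ p ∈ Ω, 0 < S p) (hBpos : ∀ p ∈ Ω, 0 < B p)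
    (hωrange : ∀ p ∈ Ω, 0 < ω p ∧ ω p < π / 2)
    (heqS : ∀ p ∈ Ω, dDir θ S p = 0)
    (heqB : ∀ p ∈ Ω, dDir θ B p = 0)
    (heqplus : ∀ p ∈ Ω,
      dDir (fun q => θ q + ω q) θ p
          + (Real.cos (ω p) ^ 2 / (Real.sin (ω p) ^ 2 + κ)) * dDir (fun q => θ q + ω q) ω p
        = (Real.sin (2 * ω p) / (4 * κ)) *
            ((1 / γ) * dDir (fun q => θ q + ω q) (fun q => Real.log (S q)) p
              - dDir (fun q => θ q + ω q) (fun q => Real.log (B q)) p))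
    (heqminus : ∀ p ∈ Ω,
      dDir (fun q => θ q - ω q) θ p
          - (Real.cos (ω p) ^ 2 / (Real.sin (ω p) ^ 2 + κ)) * dDir (fun q => θ q - ω q) ω p
        = -(Real.sin (2 * ω p) / (4 * κ)) *
            ((1 / γ) * dDir (fun q => θ q - ω q) (fun q => Real.log (S q)) p
              - dDir (fun q => θ q - ω q) (fun q => Real.log (B q)) p)) :
    ∀ I : ℝ × ℝ → ℝ, ContDiffOn ℝ 2 I Ω → (∀ p ∈ Ω, dDir θ I p = 0) →
      ∀ p ∈ Ω,
        dDir θ (fun q => dDir (fun z => θ z + ω z) I q / Gfun κ (ω q)) p = 0 := by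
  intro I hI hI0 p hp
  have hmem : Ω ∈ nhds p := hΩ.mem_nhds hp
  have hκpos : 0 < κ := by rw [hκ]; linarith
  have hω0 : 0 < ω p := (hωrange p hp).1
  have hωlt : ω p < π / 2 := (hωrange p hp).2
  have hswpos : 0 < Real.sin (ω p) :=
    Real.sin_pos_of_pos_of_lt_pi hω0 (by linarith [Real.pi_pos])
  have hcwpos : 0 < Real.cos (ω p) :=
    Real.cos_pos_of_mem_Ioo ⟨by linarith [Real.pi_pos], hωlt⟩
  have hbasepos : 0 < Real.sin (ω p) ^ 2 / (κ + Real.sin (ω p) ^ 2) := by positivity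
  have hApos : 0 < Gfun κ (ω p) := Real.rpow_pos_of_pos hbasepos _
  have hSp : 0 < S p := hSpos p hp
  have hBp : 0 < B p := hBpos p hp
  -- first derivatives
  have hθd : HasFDerivAt θ (fderiv ℝ θ p) p :=
    ((hθ.contDiffAt hmem).differentiableAt (by norm_num)).hasFDerivAt
  have hωd : HasFDerivAt ω (fderiv ℝ ω p) p :=
    ((hω.contDiffAt hmem).differentiableAt (by norm_num)).hasFDerivAt
  have hSd : HasFDerivAt S (fderiv ℝ S p) p :=
    ((hS.contDiffAt hmem).differentiableAt (by norm_num)).hasFDerivAt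
  have hBd : HasFDerivAt B (fderiv ℝ B p) p :=
    ((hB.contDiffAt hmem).differentiableAt (by norm_num)).hasFDerivAt
  -- second derivative of I
  have hIc : ContDiffAt ℝ 2 I p := hI.contDiffAt hmem
  have hΦ : ContDiffAt ℝ 1 (fderiv ℝ I) p := hIc.fderiv_right (by norm_num)
  have hH : HasFDerivAt (fderiv ℝ I) (fderiv ℝ (fderiv ℝ I) p) p :=
    (hΦ.differentiableAt (by norm_num)).hasFDerivAt
  set H := fderiv ℝ (fderiv ℝ I) p with hHdef
  have hPx : ∀ u : ℝ × ℝ, HasFDerivAt (fun q => fderiv ℝ I q u)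
      ((ContinuousLinearMap.apply ℝ ℝ u).comp H) p :=
    fun u => (ContinuousLinearMap.apply ℝ ℝ u).hasFDerivAt.comp p hH
  -- symmetry of second derivative
  have hev : ∀ᶠ q in nhds p, HasFDerivAt I (fderiv ℝ I q) q := by
    filter_upwards [hmem] with q hq
    exact ((hI.contDiffAt (hΩ.mem_nhds hq)).differentiableAt (by norm_num)).hasFDerivAt
  have hsym : H ((1:ℝ),(0:ℝ)) ((0:ℝ),(1:ℝ)) = H ((0:ℝ),(1:ℝ)) ((1:ℝ),(0:ℝ)) :=
    second_derivative_symmetric_of_eventually hev hH _ _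
    -- numerator derivative
  have hca : HasFDerivAt (fun q => Real.cos (θ q + ω q))
      (-Real.sin (θ p + ω p) • (fderiv ℝ θ p + fderiv ℝ ω p)) p := (hθd.add hωd).cos
  have hsa : HasFDerivAt (fun q => Real.sin (θ q + ω q))
      (Real.cos (θ p + ω p) • (fderiv ℝ θ p + fderiv ℝ ω p)) p := (hθd.add hωd).sin
  have hN : HasFDerivAt (fun q => Real.cos (θ q + ω q) * fderiv ℝ I q (1,0)
      + Real.sin (θ q + ω q) * fderiv ℝ I q (0,1))
      ((Real.cos (θ p + ω p) • ((ContinuousLinearMap.apply ℝ ℝ ((1:ℝ),(0:ℝ))).comp H)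
          + fderiv ℝ I p (1,0) • (-Real.sin (θ p + ω p) • (fderiv ℝ θ p + fderiv ℝ ω p)))
        + (Real.sin (θ p + ω p) • ((ContinuousLinearMap.apply ℝ ℝ ((0:ℝ),(1:ℝ))).comp H)
          + fderiv ℝ I p (0,1) • (Real.cos (θ p + ω p) • (fderiv ℝ θ p + fderiv ℝ ω p)))) p :=
    (hca.mul (hPx (1,0))).add (hsa.mul (hPx (0,1)))
  -- derivative of the inverse of G ∘ ω
  have hb1 : HasDerivAt (fun t => Real.sin t ^ 2)
      (2 * Real.sin (ω p) * Real.cos (ω p)) (ω p) := by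
    exact ((Real.hasDerivAt_sin (ω p)).pow 2).congr_deriv (by norm_num)
  have hb2 : HasDerivAt (fun t => κ + Real.sin t ^ 2)
      (2 * Real.sin (ω p) * Real.cos (ω p)) (ω p) := hb1.const_add κ
  have hbase : HasDerivAt (fun t => Real.sin t ^ 2 / (κ + Real.sin t ^ 2))
      ((2 * Real.sin (ω p) * Real.cos (ω p) * (κ + Real.sin (ω p) ^ 2)
        - Real.sin (ω p) ^ 2 * (2 * Real.sin (ω p) * Real.cos (ω p)))
        / (κ + Real.sin (ω p) ^ 2) ^ 2) (ω p) :=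
    hb1.div hb2 (by positivity)
  have hrpow : HasDerivAt (fun t => Gfun κ t)
      ((2 * Real.sin (ω p) * Real.cos (ω p) * (κ + Real.sin (ω p) ^ 2)
        - Real.sin (ω p) ^ 2 * (2 * Real.sin (ω p) * Real.cos (ω p)))
        / (κ + Real.sin (ω p) ^ 2) ^ 2 * ((κ + 1) / (2 * κ))
        * (Real.sin (ω p) ^ 2 / (κ + Real.sin (ω p) ^ 2)) ^ ((κ + 1) / (2 * κ) - 1)) (ω p) :=
    hbase.rpow_const (Or.inl (ne_of_gt hbasepos))
  have hGinv1 : HasDerivAt (fun t => (Gfun κ t)⁻¹)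
      (-((2 * Real.sin (ω p) * Real.cos (ω p) * (κ + Real.sin (ω p) ^ 2)
        - Real.sin (ω p) ^ 2 * (2 * Real.sin (ω p) * Real.cos (ω p)))
        / (κ + Real.sin (ω p) ^ 2) ^ 2 * ((κ + 1) / (2 * κ))
        * (Real.sin (ω p) ^ 2 / (κ + Real.sin (ω p) ^ 2)) ^ ((κ + 1) / (2 * κ) - 1))
        / Gfun κ (ω p) ^ 2) (ω p) :=
    hrpow.inv (ne_of_gt hApos)
  have hGinv : HasFDerivAt (fun q => (Gfun κ (ω q))⁻¹)
      ((-((2 * Real.sin (ω p) * Real.cos (ω p) * (κ + Real.sin (ω p) ^ 2)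
        - Real.sin (ω p) ^ 2 * (2 * Real.sin (ω p) * Real.cos (ω p)))
        / (κ + Real.sin (ω p) ^ 2) ^ 2 * ((κ + 1) / (2 * κ))
        * (Real.sin (ω p) ^ 2 / (κ + Real.sin (ω p) ^ 2)) ^ ((κ + 1) / (2 * κ) - 1))
        / Gfun κ (ω p) ^ 2) • fderiv ℝ ω p) p :=
    hGinv1.comp_hasFDerivAt p hωd
  have hF : HasFDerivAt (fun q => (Real.cos (θ q + ω q) * fderiv ℝ I q (1,0)
      + Real.sin (θ q + ω q) * fderiv ℝ I q (0,1)) / Gfun κ (ω q))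
      ((Real.cos (θ p + ω p) * fderiv ℝ I p (1,0)
          + Real.sin (θ p + ω p) * fderiv ℝ I p (0,1)) •
        ((-((2 * Real.sin (ω p) * Real.cos (ω p) * (κ + Real.sin (ω p) ^ 2)
          - Real.sin (ω p) ^ 2 * (2 * Real.sin (ω p) * Real.cos (ω p)))
          / (κ + Real.sin (ω p) ^ 2) ^ 2 * ((κ + 1) / (2 * κ))
          * (Real.sin (ω p) ^ 2 / (κ + Real.sin (ω p) ^ 2)) ^ ((κ + 1) / (2 * κ) - 1))
          / Gfun κ (ω p) ^ 2) • fderiv ℝ ω p)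
        + (Gfun κ (ω p))⁻¹ •
          ((Real.cos (θ p + ω p) • ((ContinuousLinearMap.apply ℝ ℝ ((1:ℝ),(0:ℝ))).comp H)
            + fderiv ℝ I p (1,0) • (-Real.sin (θ p + ω p) • (fderiv ℝ θ p + fderiv ℝ ω p)))
          + (Real.sin (θ p + ω p) • ((ContinuousLinearMap.apply ℝ ℝ ((0:ℝ),(1:ℝ))).comp H)
            + fderiv ℝ I p (0,1) • (Real.cos (θ p + ω p) • (fderiv ℝ θ p + fderiv ℝ ω p))))) p := by
    have := hN.mul hGinv
    simp only [div_eq_mul_inv]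
    exact this
  simp only [dDir, px, py]
  rw [hF.fderiv]
  simp only [ContinuousLinearMap.add_apply, ContinuousLinearMap.smul_apply,
    ContinuousLinearMap.comp_apply, ContinuousLinearMap.apply_apply, smul_eq_mul,
    ContinuousLinearMap.coe_comp', Function.comp_apply]
  -- scalar facts
  have hγpos : 0 < γ := by linarith
  have hpyth : Real.cos (ω p) ^ 2 + Real.sin (ω p) ^ 2 = 1 := Real.cos_sq_add_sin_sq (ω p)
  have hAA' : (Real.sin (ω p) ^ 2 / (κ + Real.sin (ω p) ^ 2)) ^ ((κ + 1) / (2 * κ) - 1)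
      * (Real.sin (ω p) ^ 2 / (κ + Real.sin (ω p) ^ 2)) = Gfun κ (ω p) := by
    rw [Gfun, ← Real.rpow_add_one (ne_of_gt hbasepos) ((κ + 1) / (2 * κ) - 1), sub_add_cancel]
  have hF1 : Real.cos (θ p) * fderiv ℝ I p (1,0) + Real.sin (θ p) * fderiv ℝ I p (0,1) = 0 :=
    hI0 p hp
  -- differentiating ∂⁰I = 0
  have hg0 : HasFDerivAt (fun q => Real.cos (θ q) * fderiv ℝ I q (1,0)
      + Real.sin (θ q) * fderiv ℝ I q (0,1))
      ((Real.cos (θ p) • ((ContinuousLinearMap.apply ℝ ℝ ((1:ℝ),(0:ℝ))).comp H)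
        + fderiv ℝ I p (1,0) • (-Real.sin (θ p) • fderiv ℝ θ p))
      + (Real.sin (θ p) • ((ContinuousLinearMap.apply ℝ ℝ ((0:ℝ),(1:ℝ))).comp H)
        + fderiv ℝ I p (0,1) • (Real.cos (θ p) • fderiv ℝ θ p))) p :=
    (hθd.cos.mul (hPx (1,0))).add (hθd.sin.mul (hPx (0,1)))
  have hg00 : HasFDerivAt (fun q => Real.cos (θ q) * fderiv ℝ I q (1,0)
      + Real.sin (θ q) * fderiv ℝ I q (0,1)) (0 : (ℝ × ℝ) →L[ℝ] ℝ) p := by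
    apply (hasFDerivAt_const (0:ℝ) p).congr_of_eventuallyEq
    filter_upwards [hmem] with q hq
    exact hI0 q hq
  have hL0 := hg0.unique hg00
  have hF2a : Real.cos (θ p) * H (1,0) (1,0)
      + fderiv ℝ I p (1,0) * (-Real.sin (θ p) * fderiv ℝ θ p (1,0))
      + (Real.sin (θ p) * H (1,0) (0,1)
      + fderiv ℝ I p (0,1) * (Real.cos (θ p) * fderiv ℝ θ p (1,0))) = 0 := by
    have h := DFunLike.congr_fun hL0 ((1:ℝ),(0:ℝ))
    simp only [ContinuousLinearMap.add_apply, ContinuousLinearMap.smul_apply,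
      ContinuousLinearMap.comp_apply, ContinuousLinearMap.apply_apply, smul_eq_mul,
      ContinuousLinearMap.coe_comp', Function.comp_apply,
      ContinuousLinearMap.zero_apply] at h
    linear_combination h
  have hF2b : Real.cos (θ p) * H (0,1) (1,0)
      + fderiv ℝ I p (1,0) * (-Real.sin (θ p) * fderiv ℝ θ p (0,1))
      + (Real.sin (θ p) * H (0,1) (0,1)
      + fderiv ℝ I p (0,1) * (Real.cos (θ p) * fderiv ℝ θ p (0,1))) = 0 := by
    have h := DFunLike.congr_fun hL0 ((0:ℝ),(1:ℝ))
    simp only [ContinuousLinearMap.add_apply, ContinuousLinearMap.smul_apply,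
      ContinuousLinearMap.comp_apply, ContinuousLinearMap.apply_apply, smul_eq_mul,
      ContinuousLinearMap.coe_comp', Function.comp_apply,
      ContinuousLinearMap.zero_apply] at h
    linear_combination h
  -- entropy and Bernoulli along the flow
  have hS0 : Real.cos (θ p) * fderiv ℝ S p (1,0) + Real.sin (θ p) * fderiv ℝ S p (0,1) = 0 :=
    heqS p hp
  have hB0 : Real.cos (θ p) * fderiv ℝ B p (1,0) + Real.sin (θ p) * fderiv ℝ B p (0,1) = 0 :=
    heqB p hp
  -- characteristic equations in scalar form
  have hlogS : fderiv ℝ (fun q => Real.log (S q)) p = (S p)⁻¹ • fderiv ℝ S p :=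
    (hSd.log (ne_of_gt hSp)).fderiv
  have hlogB : fderiv ℝ (fun q => Real.log (B q)) p = (B p)⁻¹ • fderiv ℝ B p :=
    (hBd.log (ne_of_gt hBp)).fderiv
  have hplus' := heqplus p hp
  have hminus' := heqminus p hp
  simp only [dDir, px, py, hlogS, hlogB, ContinuousLinearMap.smul_apply, smul_eq_mul,
    Real.sin_two_mul] at hplus' hminus'
  have hplus'' : (Real.cos (θ p + ω p) * fderiv ℝ θ p (1,0)
        + Real.sin (θ p + ω p) * fderiv ℝ θ p (0,1))
      + Real.cos (ω p) ^ 2 / (Real.sin (ω p) ^ 2 + κ)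
        * (Real.cos (θ p + ω p) * fderiv ℝ ω p (1,0)
          + Real.sin (θ p + ω p) * fderiv ℝ ω p (0,1))
      = 2 * Real.sin (ω p) * Real.cos (ω p) / (4 * κ) *
          (1 / γ * (Real.cos (θ p + ω p) * ((S p)⁻¹ * fderiv ℝ S p (1,0))
              + Real.sin (θ p + ω p) * ((S p)⁻¹ * fderiv ℝ S p (0,1)))
            - (Real.cos (θ p + ω p) * ((B p)⁻¹ * fderiv ℝ B p (1,0))
              + Real.sin (θ p + ω p) * ((B p)⁻¹ * fderiv ℝ B p (0,1)))) := by
    linear_combination hplus'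
  have hminus'' : (Real.cos (θ p - ω p) * fderiv ℝ θ p (1,0)
        + Real.sin (θ p - ω p) * fderiv ℝ θ p (0,1))
      - Real.cos (ω p) ^ 2 / (Real.sin (ω p) ^ 2 + κ)
        * (Real.cos (θ p - ω p) * fderiv ℝ ω p (1,0)
          + Real.sin (θ p - ω p) * fderiv ℝ ω p (0,1))
      = -(2 * Real.sin (ω p) * Real.cos (ω p) / (4 * κ)) *
          (1 / γ * (Real.cos (θ p - ω p) * ((S p)⁻¹ * fderiv ℝ S p (1,0))
              + Real.sin (θ p - ω p) * ((S p)⁻¹ * fderiv ℝ S p (0,1)))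
            - (Real.cos (θ p - ω p) * ((B p)⁻¹ * fderiv ℝ B p (1,0))
              + Real.sin (θ p - ω p) * ((B p)⁻¹ * fderiv ℝ B p (0,1)))) := by
    linear_combination hminus'
  have halg := alg_scalar κ γ (Real.cos (θ p)) (Real.sin (θ p)) (Real.cos (ω p))
    (Real.sin (ω p)) (Real.cos (θ p + ω p)) (Real.sin (θ p + ω p)) (Real.cos (θ p - ω p))
    (Real.sin (θ p - ω p)) (S p) (B p)
    (fderiv ℝ θ p (1,0)) (fderiv ℝ θ p (0,1)) (fderiv ℝ ω p (1,0)) (fderiv ℝ ω p (0,1))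
    (fderiv ℝ S p (1,0)) (fderiv ℝ S p (0,1)) (fderiv ℝ B p (1,0)) (fderiv ℝ B p (0,1))
    (fderiv ℝ I p (1,0)) (fderiv ℝ I p (0,1))
    (H (1,0) (1,0)) (H (1,0) (0,1)) (H (0,1) (1,0)) (H (0,1) (0,1))
    (Gfun κ (ω p))
    ((Real.sin (ω p) ^ 2 / (κ + Real.sin (ω p) ^ 2)) ^ ((κ + 1) / (2 * κ) - 1))
    hκpos hγpos hpyth (Real.cos_add _ _) (Real.sin_add _ _) (Real.cos_sub _ _)
    (Real.sin_sub _ _) hswpos hcwpos hSp hBp hApos hAA' hF1 hF2a hF2b hsym hS0 hB0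
    hplus'' hminus''
  linear_combination halg
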